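/- Let V ⊂ ℂ be bounded Borel, μ a Borel probability measure on V, and P the product measure on Ω = V^ℕ. Fix N ∈ ℕ, α ∈ (0,1), R_0 > 0, and for z ∈ ℂ, k ∈ ℕ let S^k(z) = {ω ∈ Ω : |f^k_ω(z)| < R_0}. Assume that for every z ∈ ℂ, P(S^N(z)) ≤ 1 − α. Then for every z and every j ∈ ℕ, P(S^{jN}(z)) ≤ (1 − α)^j; consequently there is γ > 0 with P({ω : k(z,ω) > k}) ≤ C e^{−γk} for all k, uniformly in z. -/

import Mathlib

open Filter MeasureTheory Topology

/-- Non-autonomous iteration of quadratic maps: `fiter c (n+1) z = (fiter c n z)^2 + c n`. -/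
noncomputable def fiter (c : ℕ → ℂ) : ℕ → ℂ → ℂ
  | 0, z => z
  | n + 1, z => (fiter c n z) ^ 2 + c n

/-- The Green's function, defined via limsup of `2^{-n} log |f^n_ω(z)|`. -/
noncomputable def green (c : ℕ → ℂ) (z : ℂ) : ℝ :=
  Filter.limsup (fun n => (1 / 2 ^ n : ℝ) * Real.log (‖fiter c n z‖)) Filter.atTop
open scoped ENNReal

/-- Extension of a finite tuple by zero. -/
noncomputable def extn {k : ℕ} (c : Fin k → ℂ) : ℕ → ℂ :=
  fun i => if h : i < k then c ⟨i, h⟩ else 0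

lemma fiter_congr {c c' : ℕ → ℂ} {k : ℕ} (h : ∀ i < k, c i = c' i) (z : ℂ) :
    fiter c k z = fiter c' k z := by
  induction k with
  | zero => rfl
  | succ n ih =>
    have h1 : ∀ i < n, c i = c' i := fun i hi => h i (Nat.lt_succ_of_lt hi)
    simp [fiter, ih h1, h n (Nat.lt_succ_self n)]

lemma fiter_add (c : ℕ → ℂ) (m n : ℕ) (z : ℂ) :
    fiter c (m + n) z = fiter (fun i => c (m + i)) n (fiter c m z) := by
  induction n with
  | zero => rfl
  | succ n ih =>
    show fiter c ((m + n) + 1) z = _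
    simp [fiter, ih]

lemma escape_step {R R₀ : ℝ} (hR : 0 < R) (hR₀ : 2 * R₀ ≤ R₀ ^ 2 - R) (hR₀pos : 0 < R₀)
    {w c : ℂ} (hw : R₀ ≤ ‖w‖) (hc : ‖c‖ ≤ R) :
    R₀ ≤ ‖w ^ 2 + c‖ := by
  have h1 : ‖w ^ 2‖ - ‖c‖ ≤ ‖w ^ 2 + c‖ := by
    have := norm_sub_norm_le (w ^ 2) (-c)
    simpa [sub_neg_eq_add] using this
  rw [norm_pow] at h1
  have h2 : R₀ ^ 2 ≤ (‖w‖) ^ 2 := by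
    have := norm_nonneg w
    nlinarith
  nlinarith

lemma escape {R R₀ : ℝ} (hR : 0 < R) (hR₀ : 2 * R₀ ≤ R₀ ^ 2 - R) (hR₀pos : 0 < R₀)
    (c : ℕ → ℂ) (hc : ∀ i, ‖c i‖ ≤ R) (z : ℂ) (m : ℕ)
    (h : R₀ ≤ ‖fiter c m z‖) (n : ℕ) :
    R₀ ≤ ‖fiter c (m + n) z‖ := by
  induction n with
  | zero => exact h
  | succ n ih =>
    show R₀ ≤ ‖fiter c ((m + n) + 1) z‖
    exact escape_step hR hR₀ hR₀pos ih (hc (m + n))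

lemma measurable_fiter (k : ℕ) : Measurable (fun p : (ℕ → ℂ) × ℂ => fiter p.1 k p.2) := by
  induction k with
  | zero => exact measurable_snd
  | succ n ih =>
    exact (ih.pow_const 2).add ((measurable_pi_apply n).comp measurable_fst)

lemma measurable_extn {k : ℕ} : Measurable (extn (k := k)) := by
  apply measurable_pi_lambda
  intro i
  by_cases h : i < k
  · simp only [extn, dif_pos h]; exact measurable_pi_apply _
  · simp only [extn, dif_neg h]; exact measurable_const

theorem stmt19 (V : Set ℂ) (hVb : Bornology.IsBounded V) (hVm : MeasurableSet V)
    (μ : Measure ℂ) [IsProbabilityMeasure μ] (hμV : μ V = 1)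
    (P : Measure (ℕ → ℂ)) [IsProbabilityMeasure P]
    (hP : ∀ n : ℕ, P.map (fun ω (i : Fin n) => ω i) = Measure.pi fun _ : Fin n => μ)
    (R R₀ : ℝ) (hR : 0 < R) (hVR : V ⊆ Metric.closedBall (0 : ℂ) R)
    (hR₀ : 2 * R₀ ≤ R₀ ^ 2 - R) (hR₀pos : 0 < R₀)
    (N : ℕ) (hN : 0 < N) (α : ℝ) (hα : 0 < α) (hα1 : α < 1)
    (hstep : ∀ z : ℂ, P {ω | ‖fiter ω N z‖ < R₀} ≤ ENNReal.ofReal (1 - α)) :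
    (∀ (z : ℂ) (j : ℕ),
        P {ω | ‖fiter ω (j * N) z‖ < R₀} ≤ ENNReal.ofReal ((1 - α) ^ j)) ∧
      ∃ γ : ℝ, 0 < γ ∧ ∃ C : ℝ, 0 < C ∧ ∀ (z : ℂ) (k : ℕ),
        P {ω | ‖fiter ω k z‖ < R₀} ≤ ENNReal.ofReal (C * Real.exp (-γ * k)) := by
  classical
  set ν : ∀ k : ℕ, Measure (Fin k → ℂ) := fun k => Measure.pi (fun _ : Fin k => μ) with hνdef
  have hVabs : ∀ w ∈ V, ‖w‖ ≤ R := by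
    intro w hw
    have := hVR hw
    simpa [Complex.dist_eq] using Metric.mem_closedBall.1 this
  have hVc : μ Vᶜ = 0 := by
    have := measure_compl hVm (measure_ne_top μ V)
    simp [hμV, this]
  -- measurability of projections
  have hproj : ∀ k : ℕ, Measurable (fun (ω : ℕ → ℂ) (i : Fin k) => ω i) :=
    fun k => measurable_pi_lambda _ fun i => measurable_pi_apply _
  -- marginal property
  have hmarg : ∀ (k : ℕ) (T : Set (Fin k → ℂ)), MeasurableSet T →
      P ((fun ω (i : Fin k) => ω i) ⁻¹' T) = ν k T := by
    intro k T hT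
    rw [← Measure.map_apply (hproj k) hT, hP k]
  -- the event agrees with the finite-dimensional one
  have hagree : ∀ (k : ℕ) (ω : ℕ → ℂ) (z : ℂ),
      fiter (extn (fun i : Fin k => ω i)) k z = fiter ω k z := by
    intro k ω z
    exact fiter_congr (fun i hi => by simp [extn, hi]) z
  have hFmeas : ∀ (k : ℕ) (z : ℂ),
      Measurable (fun c : Fin k → ℂ => ‖fiter (extn c) k z‖) := by
    intro k z
    exact continuous_norm.measurable.comp
      ((measurable_fiter k).comp (measurable_extn.prodMk measurable_const))
  have hTmeas : ∀ (k : ℕ) (z : ℂ),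
      MeasurableSet {c : Fin k → ℂ | ‖fiter (extn c) k z‖ < R₀} :=
    fun k z => measurableSet_lt (hFmeas k z) measurable_const
  have hQ : ∀ (k : ℕ) (z : ℂ),
      P {ω | ‖fiter ω k z‖ < R₀}
        = ν k {c : Fin k → ℂ | ‖fiter (extn c) k z‖ < R₀} := by
    intro k z
    have hset : {ω : ℕ → ℂ | ‖fiter ω k z‖ < R₀}
        = (fun ω (i : Fin k) => ω i) ⁻¹' {c : Fin k → ℂ | ‖fiter (extn c) k z‖ < R₀} := by
      ext ω
      simp only [Set.mem_setOf_eq, Set.mem_preimage]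
      rw [hagree k ω z]
    rw [hset, hmarg k _ (hTmeas k z)]
  -- null sets of unbounded coordinates, in finite product
  have hevalV : ∀ (k : ℕ) (j : Fin k), ν k {c : Fin k → ℂ | c j ∈ Vᶜ} = 0 := by
    intro k j
    have hset : {c : Fin k → ℂ | c j ∈ Vᶜ} = Function.eval j ⁻¹' Vᶜ := rfl
    rw [hset, Set.eval_preimage, hνdef, Measure.pi_pi]
    exact Finset.prod_eq_zero (Finset.mem_univ j) (by simp [hVc])
  have hbadfin : ∀ (k : ℕ), ν k {c : Fin k → ℂ | ¬ ∀ i, ‖c i‖ ≤ R} = 0 := by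
    intro k
    refine measure_mono_null (fun c hc => ?_) (measure_iUnion_null fun j : Fin k => hevalV k j)
    push_neg at hc
    obtain ⟨i, hi⟩ := hc
    exact Set.mem_iUnion.2 ⟨i, fun hmem => absurd (hVabs _ hmem) (not_le.2 hi)⟩
  -- null set of unbounded coordinates for P
  have hbadP : P {ω : ℕ → ℂ | ¬ ∀ i, ‖ω i‖ ≤ R} = 0 := by
    have h1 : ∀ i : ℕ, P {ω : ℕ → ℂ | ω i ∈ Vᶜ} = 0 := by
      intro i
      have hlt : i < i + 1 := Nat.lt_succ_self i
      have hset : {ω : ℕ → ℂ | ω i ∈ Vᶜ}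
          = (fun ω (l : Fin (i + 1)) => ω l) ⁻¹' {c : Fin (i + 1) → ℂ | c ⟨i, hlt⟩ ∈ Vᶜ} := rfl
      have hTm : MeasurableSet {c : Fin (i + 1) → ℂ | c ⟨i, hlt⟩ ∈ Vᶜ} :=
        (measurable_pi_apply _) hVm.compl
      rw [hset]
      exact (hmarg _ _ hTm).trans (hevalV _ _)
    refine measure_mono_null (fun ω hω => ?_) (measure_iUnion_null fun i : ℕ => h1 i)
    push_neg at hω
    obtain ⟨i, hi⟩ := hω
    exact Set.mem_iUnion.2 ⟨i, fun hmem => absurd (hVabs _ hmem) (not_le.2 hi)⟩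
  -- monotonicity in time
  have hmono : ∀ (z : ℂ) (m n : ℕ),
      P {ω | ‖fiter ω (m + n) z‖ < R₀} ≤ P {ω | ‖fiter ω m z‖ < R₀} := by
    intro z m n
    have hsub : {ω : ℕ → ℂ | ‖fiter ω (m + n) z‖ < R₀}
        ⊆ {ω : ℕ → ℂ | ‖fiter ω m z‖ < R₀}
          ∪ {ω : ℕ → ℂ | ¬ ∀ i, ‖ω i‖ ≤ R} := by
      intro ω hω
      by_cases hg : ∀ i, ‖ω i‖ ≤ R
      · left
        by_contra hcon
        have := escape hR hR₀ hR₀pos ω hg z m (not_lt.1 hcon) n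
        exact absurd hω (not_lt.2 this)
      · right; exact hg
    calc P {ω | ‖fiter ω (m + n) z‖ < R₀}
        ≤ P ({ω : ℕ → ℂ | ‖fiter ω m z‖ < R₀}
            ∪ {ω : ℕ → ℂ | ¬ ∀ i, ‖ω i‖ ≤ R}) := measure_mono hsub
      _ ≤ P {ω | ‖fiter ω m z‖ < R₀}
            + P {ω : ℕ → ℂ | ¬ ∀ i, ‖ω i‖ ≤ R} := measure_union_le _ _
      _ = P {ω | ‖fiter ω m z‖ < R₀} := by rw [hbadP, add_zero]
  -- the key independence step
  have hkey : ∀ (z : ℂ) (m : ℕ),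
      P {ω | ‖fiter ω (m + N) z‖ < R₀}
        ≤ ENNReal.ofReal (1 - α) * P {ω | ‖fiter ω m z‖ < R₀} := by
    intro z m
    -- the split map
    set Φ : (ℕ → ℂ) → (Fin m → ℂ) × (Fin N → ℂ) :=
      fun ω => (fun i => ω i, fun i => ω (m + i)) with hΦdef
    have hΦmeas : Measurable Φ :=
      (measurable_pi_lambda _ fun i => measurable_pi_apply _).prodMk
        (measurable_pi_lambda _ fun i => measurable_pi_apply _)
    -- the measurable equivalence
    set e1 := MeasurableEquiv.piCongrLeft (fun _ : Fin (m + N) => ℂ) finSumFinEquiv with he1def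
    set e := e1.symm.trans (MeasurableEquiv.sumPiEquivProdPi fun _ : Fin m ⊕ Fin N => ℂ) with hedef
    have hpres : MeasurePreserving e (ν (m + N)) ((ν m).prod (ν N)) := by
      exact (measurePreserving_sumPiEquivProdPi (fun _ : Fin m ⊕ Fin N => μ)).comp
        ((measurePreserving_piCongrLeft (fun _ : Fin (m + N) => μ) finSumFinEquiv).symm e1)
    have hΦeq : Φ = e ∘ (fun ω (i : Fin (m + N)) => ω i) := by
      funext ω
      have h1 : ∀ j : Fin m ⊕ Fin N,
          e1.symm (fun i : Fin (m + N) => ω i) j = ω (finSumFinEquiv j) := by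
        intro j
        simp [he1def, MeasurableEquiv.piCongrLeft, Equiv.piCongrLeft_symm_apply]
      apply Prod.ext
      · funext i
        show ω i = (e ((fun ω (i : Fin (m + N)) => ω i) ω)).1 i
        have := h1 (Sum.inl i)
        simp only [finSumFinEquiv_apply_left] at this
        simp [hedef, MeasurableEquiv.sumPiEquivProdPi, this]
      · funext i
        show ω (m + i) = (e ((fun ω (i : Fin (m + N)) => ω i) ω)).2 i
        have := h1 (Sum.inr i)
        simp only [finSumFinEquiv_apply_right] at this
        simp [hedef, MeasurableEquiv.sumPiEquivProdPi, this, Fin.coe_natAdd]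
    have hΦmap : P.map Φ = (ν m).prod (ν N) := by
      rw [hΦeq, ← Measure.map_map e.measurable (hproj (m + N)), hP (m + N), hpres.map_eq]
    -- the event as a preimage
    set S : Set ((Fin m → ℂ) × (Fin N → ℂ)) :=
      {p | ‖fiter (extn p.2) N (fiter (extn p.1) m z)‖ < R₀} with hSdef
    have hSmeas : MeasurableSet S := by
      apply measurableSet_lt _ measurable_const
      apply continuous_norm.measurable.comp
      exact (measurable_fiter N).comp
        ((measurable_extn.comp measurable_snd).prodMk
          (((measurable_fiter m).comp
            ((measurable_extn.comp measurable_fst).prodMk measurable_const))))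
    have hpre : {ω : ℕ → ℂ | ‖fiter ω (m + N) z‖ < R₀} = Φ ⁻¹' S := by
      ext ω
      simp only [Set.mem_setOf_eq, Set.mem_preimage, hSdef, hΦdef]
      have h1 : fiter (extn (fun i : Fin m => ω i)) m z = fiter ω m z := hagree m ω z
      have h2 : fiter (extn (fun i : Fin N => ω (m + i))) N (fiter ω m z)
          = fiter (fun i => ω (m + i)) N (fiter ω m z) :=
        fiter_congr (fun i hi => by simp [extn, hi]) _
      rw [fiter_add, h1, h2]
    -- compute via Fubini
    have hcomp : P {ω | ‖fiter ω (m + N) z‖ < R₀} = ((ν m).prod (ν N)) S := by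
      rw [hpre, ← hΦmap, Measure.map_apply hΦmeas hSmeas]
    rw [hcomp, Measure.prod_apply hSmeas]
    -- bound the sections
    have hsec : ∀ a : Fin m → ℂ, ν N (Prod.mk a ⁻¹' S)
        ≤ Set.indicator {a : Fin m → ℂ | ‖fiter (extn a) m z‖ < R₀}
            (fun _ => ENNReal.ofReal (1 - α)) a := by
      intro a
      by_cases h : ‖fiter (extn a) m z‖ < R₀
      · have hmem : a ∈ {a : Fin m → ℂ | ‖fiter (extn a) m z‖ < R₀} := h
        rw [Set.indicator_of_mem hmem]
        have hsect : Prod.mk a ⁻¹' S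
            = {b : Fin N → ℂ | ‖fiter (extn b) N (fiter (extn a) m z)‖ < R₀} := rfl
        rw [hsect, ← hQ N (fiter (extn a) m z)]
        exact hstep _
      · have hnm : a ∉ {a : Fin m → ℂ | ‖fiter (extn a) m z‖ < R₀} := h
        rw [Set.indicator_of_notMem hnm]
        refine le_of_eq (measure_mono_null (fun b hb => ?_) (hbadfin N))
        simp only [Set.mem_preimage, hSdef, Set.mem_setOf_eq] at hb
        intro hg
        have hcb : ∀ i, ‖extn b i‖ ≤ R := by
          intro i
          by_cases hik : i < N
          · simpa [extn, hik] using hg ⟨i, hik⟩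
          · simp [extn, hik, hR.le]
        have := escape hR hR₀ hR₀pos (extn b) hcb (fiter (extn a) m z) 0 (not_lt.1 h) N
        rw [Nat.zero_add] at this
        exact absurd hb (not_lt.2 this)
    calc ∫⁻ a, ν N (Prod.mk a ⁻¹' S) ∂(ν m)
        ≤ ∫⁻ a, Set.indicator {a : Fin m → ℂ | ‖fiter (extn a) m z‖ < R₀}
            (fun _ => ENNReal.ofReal (1 - α)) a ∂(ν m) := lintegral_mono hsec
      _ = ENNReal.ofReal (1 - α) * ν m {a : Fin m → ℂ | ‖fiter (extn a) m z‖ < R₀} :=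
          lintegral_indicator_const (hTmeas m z) _
      _ = ENNReal.ofReal (1 - α) * P {ω | ‖fiter ω m z‖ < R₀} := by rw [hQ m z]
  have hβ0 : (0 : ℝ) < 1 - α := by linarith
  have hβ1 : (1 : ℝ) - α < 1 := by linarith
  -- Part 1
  have part1 : ∀ (z : ℂ) (j : ℕ),
      P {ω | ‖fiter ω (j * N) z‖ < R₀} ≤ ENNReal.ofReal ((1 - α) ^ j) := by
    intro z j
    induction j with
    | zero =>
      simpa using prob_le_one
    | succ j ih =>
      have : (j + 1) * N = j * N + N := by ring
      rw [this]
      calc P {ω | ‖fiter ω (j * N + N) z‖ < R₀}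
          ≤ ENNReal.ofReal (1 - α) * P {ω | ‖fiter ω (j * N) z‖ < R₀} := hkey z (j * N)
        _ ≤ ENNReal.ofReal (1 - α) * ENNReal.ofReal ((1 - α) ^ j) := by
            exact mul_le_mul_right ih _
        _ = ENNReal.ofReal ((1 - α) ^ (j + 1)) := by
            rw [← ENNReal.ofReal_mul hβ0.le, pow_succ, mul_comm]
  have hmono' : ∀ (z : ℂ) (m k : ℕ), m ≤ k →
      P {ω | ‖fiter ω k z‖ < R₀} ≤ P {ω | ‖fiter ω m z‖ < R₀} := by
    intro z m k h
    obtain ⟨n, rfl⟩ := Nat.exists_eq_add_of_le h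
    exact hmono z m n
  have hN' : (0 : ℝ) < N := by exact_mod_cast hN
  have hlog : Real.log (1 - α) < 0 := Real.log_neg hβ0 hβ1
  refine ⟨part1, -Real.log (1 - α) / N, div_pos (neg_pos.2 hlog) hN', (1 - α)⁻¹,
    by positivity, ?_⟩
  intro z k
  have hjk : (k / N) * N ≤ k := Nat.div_mul_le_self k N
  have hkj : k < (k / N + 1) * N := by
    have h1 := Nat.div_add_mod k N
    have h2 := Nat.mod_lt k hN
    have h3 : (k / N + 1) * N = k / N * N + N := by ring
    have h4 : N * (k / N) = k / N * N := Nat.mul_comm _ _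
    omega
  have h1 : P {ω | ‖fiter ω k z‖ < R₀} ≤ ENNReal.ofReal ((1 - α) ^ (k / N)) :=
    le_trans (hmono' z ((k / N) * N) k hjk) (part1 z (k / N))
  refine le_trans h1 (ENNReal.ofReal_le_ofReal ?_)
  set L := Real.log (1 - α) with hLdef
  set j := k / N with hjdef
  have hkj' : (k : ℝ) < ((j : ℝ) + 1) * N := by
    push_cast
    exact_mod_cast hkj
  have hexp : (1 - α) ^ j = Real.exp ((j : ℝ) * L) := by
    rw [Real.exp_nat_mul, Real.exp_log hβ0]
  have hC : (1 - α)⁻¹ = Real.exp (-L) := by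
    rw [hLdef, ← Real.log_inv, Real.exp_log (by positivity)]
  rw [hexp, hC, ← Real.exp_add]
  apply Real.exp_le_exp.2
  have h3 : ((j : ℝ) + 1) * ↑N * L ≤ ↑k * L :=
    mul_le_mul_of_nonpos_right hkj'.le hlog.le
  have h4 : (j : ℝ) * L + L ≤ L * ↑k / ↑N := by
    rw [le_div_iff₀ hN']
    nlinarith [h3]
  have h5 : -(-L / ↑N) * ↑k = L * ↑k / ↑N := by ring
  rw [h5]
  linarith [h4]
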